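/- (Proposition 3.1, intertwining form) Let β ∈ ℝ. For every p ∈ MvPolynomial (Fin 2) ℝ, 𝔇(E₂ p) = E₂(𝔇' p), where 𝔇 = (x∂x − ∂x²) + (y∂y − ∂y²) − 2β ∂x∂y and 𝔇' = x∂x + y∂y − 2β ∂x∂y. Equivalently, conjugation of 𝔇 by e^{(∂x²+∂y²)/2} reduces it to 𝔇'. -/

import Mathlib

open MvPolynomial Finset

/-- The operator `e^{−(∂x² + ∂y²)/2}` on bivariate polynomials: the finite double sum
`E₂ p = Σ_j Σ_k ((−1)^j/(2^j j!)) ((−1)^k/(2^k k!)) ∂x^{2j} ∂y^{2k} p`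
with both sums running up to the total degree of `p`. -/
noncomputable def expNegHalfLap (p : MvPolynomial (Fin 2) ℝ) : MvPolynomial (Fin 2) ℝ :=
  ∑ j ∈ range (p.totalDegree + 1), ∑ k ∈ range (p.totalDegree + 1),
    (((-1 : ℝ) ^ j / (2 ^ j * (j.factorial : ℝ))) *
        ((-1 : ℝ) ^ k / (2 ^ k * (k.factorial : ℝ)))) •
      (⇑(pderiv (0 : Fin 2)))^[2 * j] ((⇑(pderiv (1 : Fin 2)))^[2 * k] p)

/-!
On polynomials in one variable, `∂` and multiplication by `x` satisfy `∂x = x∂ + 1`, hence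
`∂ⁿ(x∂) = (x∂)∂ⁿ + n∂ⁿ`. The coefficients `c_j = (-1)^j / (2^j j!)` of `e^{-∂²/2}` satisfy
`2(j+1) c_{j+1} = -c_j`, so in `G = Σ_{j<N} c_j ∂^{2j}` the terms `2j c_j ∂^{2j}` produced by
commuting `x∂` past `G` telescope against `∂² G`: `(x∂ - ∂²) G = G (x∂) + 2N c_N ∂^{2N}`, and the
last term kills polynomials of degree `< 2N`. The two variables commute with each other, and
`∂x∂y` commutes with both exponentials.
-/

section Gaussian

variable (K : Type*) {A : Type*} [Field K] [Ring A] [Algebra K A]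

noncomputable def gaussCoeff (j : ℕ) : K := (-1) ^ j / (2 ^ j * j.factorial)

noncomputable def gaussTrunc (d : A) (N : ℕ) : A := ∑ j ∈ range N, gaussCoeff K j • d ^ (2 * j)

variable {K}

lemma gaussCoeff_succ [CharZero K] (j : ℕ) :
    2 * (j + 1) * gaussCoeff K (j + 1) = -gaussCoeff K j := by
  simp only [gaussCoeff, pow_succ, Nat.factorial_succ]
  push_cast
  field_simp

lemma Commute.gaussTrunc_left {d a : A} (h : Commute d a) (N : ℕ) :
    Commute (gaussTrunc K d N) a :=
  Commute.sum_left _ _ _ fun _ _ => (h.pow_left _).smul_left _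

lemma gaussTrunc_apply_eq_of_pow_apply_eq_zero {V : Type*} [AddCommGroup V] [Module K V]
    {d : Module.End K V} {v : V} {M N : ℕ} (hMN : M ≤ N) (hv : (d ^ M) v = 0) :
    gaussTrunc K d N v = gaussTrunc K d M v := by
  simp only [gaussTrunc, LinearMap.sum_apply, LinearMap.smul_apply]
  refine (sum_subset (range_subset_range.mpr hMN) fun j _ hj => ?_).symm
  rw [mem_range, not_lt] at hj
  rw [← Nat.sub_add_cancel (show M ≤ 2 * j by omega), pow_add, Module.End.mul_apply, hv,
    map_zero, smul_zero]

lemma pow_mul_mul_of_mul_eq_mul_add_one {d x : A} (h : d * x = x * d + 1) (n : ℕ) :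
    d ^ n * (x * d) = x * d * d ^ n + n • d ^ n := by
  induction n with
  | zero => simp
  | succ n ih =>
    rw [pow_succ', mul_assoc, ih, mul_add, ← mul_assoc d, ← mul_assoc d, h]
    simp only [add_mul, one_mul, mul_assoc, succ_nsmul, mul_smul_comm]
    abel

lemma sub_sq_mul_gaussTrunc [CharZero K] {d x : A} (h : d * x = x * d + 1) (N : ℕ) :
    (x * d - d ^ 2) * gaussTrunc K d N =
      gaussTrunc K d N * (x * d) + (2 * N * gaussCoeff K N) • d ^ (2 * N) := by
  set f : ℕ → A := fun j => (2 * j * gaussCoeff K j) • d ^ (2 * j)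
  have h_number : gaussTrunc K d N * (x * d) = x * d * gaussTrunc K d N + ∑ j ∈ range N, f j := by
    simp only [gaussTrunc, sum_mul, mul_sum, ← sum_add_distrib, smul_mul_assoc,
      pow_mul_mul_of_mul_eq_mul_add_one h, smul_add, mul_smul_comm, f]
    refine sum_congr rfl fun j _ => ?_
    rw [← Nat.cast_smul_eq_nsmul K, smul_smul]
    push_cast
    ring_nf
  have h_sq : d ^ 2 * gaussTrunc K d N = -(∑ j ∈ range N, f j + f N) := by
    rw [← sum_range_succ, sum_range_succ']
    simp only [gaussTrunc, mul_sum, mul_smul_comm, ← pow_add, f, Nat.cast_zero, mul_zero,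
      zero_mul, zero_smul, add_zero, ← sum_neg_distrib, ← neg_smul]
    refine sum_congr rfl fun j _ => ?_
    push_cast
    rw [gaussCoeff_succ, neg_neg]
    ring_nf
  rw [sub_mul, h_number, h_sq]
  abel

lemma gaussTrunc_mul_gaussTrunc_intertwines [CharZero K] {d₀ d₁ x₀ x₁ : A}
    (h₀ : d₀ * x₀ = x₀ * d₀ + 1) (h₁ : d₁ * x₁ = x₁ * d₁ + 1) (hd : Commute d₀ d₁)
    (h₀₁ : Commute d₀ x₁) (h₁₀ : Commute d₁ x₀) (c : K) (N : ℕ) :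
    (x₀ * d₀ - d₀ ^ 2 + x₁ * d₁ - d₁ ^ 2 - c • (d₀ * d₁)) *
        (gaussTrunc K d₀ N * gaussTrunc K d₁ N) =
      gaussTrunc K d₀ N * gaussTrunc K d₁ N * (x₀ * d₀ + x₁ * d₁ - c • (d₀ * d₁)) +
        (2 * N * gaussCoeff K N) •
          (gaussTrunc K d₁ N * d₀ ^ (2 * N) + gaussTrunc K d₀ N * d₁ ^ (2 * N)) := by
  set G₀ := gaussTrunc K d₀ N
  set G₁ := gaussTrunc K d₁ N
  have e₀ : (x₀ * d₀ - d₀ ^ 2) * (G₀ * G₁) =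
      G₀ * G₁ * (x₀ * d₀) + (2 * N * gaussCoeff K N) • (G₁ * d₀ ^ (2 * N)) := by
    have hx : Commute G₁ (x₀ * d₀) := (h₁₀.mul_right hd.symm).gaussTrunc_left N
    have hp : Commute G₁ (d₀ ^ (2 * N)) := (hd.symm.pow_right _).gaussTrunc_left N
    rw [← mul_assoc, sub_sq_mul_gaussTrunc h₀, add_mul, mul_assoc, ← hx.eq, smul_mul_assoc,
      ← hp.eq]
    simp only [mul_assoc, G₀, G₁]
  have e₁ : (x₁ * d₁ - d₁ ^ 2) * (G₀ * G₁) =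
      G₀ * G₁ * (x₁ * d₁) + (2 * N * gaussCoeff K N) • (G₀ * d₁ ^ (2 * N)) := by
    have hG : Commute G₀ G₁ := ((hd.gaussTrunc_left N).symm.gaussTrunc_left N).symm
    have hx : Commute G₀ (x₁ * d₁) := (h₀₁.mul_right hd).gaussTrunc_left N
    have hp : Commute G₀ (d₁ ^ (2 * N)) := (hd.pow_right _).gaussTrunc_left N
    rw [hG.eq, ← mul_assoc, sub_sq_mul_gaussTrunc h₁, add_mul, mul_assoc, ← hx.eq,
      smul_mul_assoc, ← hp.eq]
    simp only [mul_assoc, G₀, G₁]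
  have e₂ : d₀ * d₁ * (G₀ * G₁) = G₀ * G₁ * (d₀ * d₁) :=
    Commute.eq <| Commute.mul_left
      (((Commute.refl d₀).gaussTrunc_left N).symm.mul_right (hd.symm.gaussTrunc_left N).symm)
      ((hd.gaussTrunc_left N).symm.mul_right ((Commute.refl d₁).gaussTrunc_left N).symm)
  calc _ = (x₀ * d₀ - d₀ ^ 2) * (G₀ * G₁) + (x₁ * d₁ - d₁ ^ 2) * (G₀ * G₁) -
        c • (d₀ * d₁ * (G₀ * G₁)) := by
        simp only [sub_mul, add_mul, smul_mul_assoc]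
        abel
    _ = _ := by
        rw [e₀, e₁, e₂]
        simp only [mul_add, mul_sub, mul_smul_comm, smul_add]
        abel

end Gaussian

lemma Derivation.toLinearMap_mul_mulLeft {R A : Type*} [CommSemiring R] [CommSemiring A]
    [Algebra R A] (D : Derivation R A A) (a : A) :
    (D : Module.End R A) * LinearMap.mulLeft R a =
      LinearMap.mulLeft R a * D + LinearMap.mulLeft R (D a) := by
  ext b
  simp [Derivation.leibniz, mul_comm]

namespace MvPolynomial

variable {σ R : Type*}

lemma commute_pderiv [CommRing R] (i j : σ) :
    Commute (pderiv (R := R) i : Module.End R (MvPolynomial σ R))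
      (pderiv (R := R) j : Module.End R _) := by
  have h : ⁅pderiv i, pderiv j⁆ = (0 : Derivation R (MvPolynomial σ R) (MvPolynomial σ R)) :=
    derivation_ext fun k => by
      classical
      rw [Derivation.commutator_apply]
      simp [pderiv_X, Pi.single_apply, apply_ite]
  rw [Commute, SemiconjBy, ← sub_eq_zero, ← LieRing.of_associative_ring_bracket,
    ← Derivation.commutator_coe_linear_map, h]
  rfl

variable [CommSemiring R]

lemma pderiv_mul_mulLeft_X_self (i : σ) :
    (pderiv (R := R) i : Module.End R (MvPolynomial σ R)) * LinearMap.mulLeft R (X i) =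
      LinearMap.mulLeft R (X i) * (pderiv (R := R) i : Module.End R _) + 1 := by
  rw [Derivation.toLinearMap_mul_mulLeft, pderiv_X_self, LinearMap.mulLeft_one,
    Module.End.one_eq_id]

lemma commute_pderiv_mulLeft_X {i j : σ} (h : j ≠ i) :
    Commute (pderiv (R := R) i : Module.End R (MvPolynomial σ R)) (LinearMap.mulLeft R (X j)) := by
  rw [Commute, SemiconjBy, Derivation.toLinearMap_mul_mulLeft, pderiv_X_of_ne h,
    LinearMap.mulLeft_zero_eq_zero, add_zero]

lemma totalDegree_pderiv_le (i : σ) (p : MvPolynomial σ R) :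
    (pderiv i p).totalDegree ≤ p.totalDegree - 1 := by
  classical
  refine Finset.sup_le fun m hm => ?_
  have hcoeff : m + Finsupp.single i 1 ∈ p.support := by
    rw [mem_support_iff, coeff_pderiv] at hm
    exact mem_support_iff.mpr (left_ne_zero_of_mul hm)
  have := le_totalDegree hcoeff
  rw [Finsupp.sum_add_index' (fun _ => rfl) (fun _ _ _ => rfl),
    Finsupp.sum_single_index rfl] at this
  omega

lemma pderiv_pow_apply_eq_zero {p : MvPolynomial σ R} {n : ℕ} (i : σ) (h : p.totalDegree < n) :
    ((pderiv (R := R) i : Module.End R (MvPolynomial σ R)) ^ n) p = 0 := by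
  induction n generalizing p with
  | zero => omega
  | succ n ih =>
    rw [pow_succ, Module.End.mul_apply]
    rcases n with _ | n
    · rw [totalDegree_eq_zero_iff_eq_C.mp (Nat.lt_one_iff.mp h)]
      simp
    · exact ih ((totalDegree_pderiv_le i p).trans_lt (by omega))

end MvPolynomial

local notation "∂₀" => (pderiv (R := ℝ) (0 : Fin 2) : Module.End ℝ (MvPolynomial (Fin 2) ℝ))
local notation "∂₁" => (pderiv (R := ℝ) (1 : Fin 2) : Module.End ℝ (MvPolynomial (Fin 2) ℝ))

lemma expNegHalfLap_eq_gaussTrunc_mul_apply {p : MvPolynomial (Fin 2) ℝ} {N : ℕ}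
    (h : p.totalDegree < N) :
    expNegHalfLap p = (gaussTrunc ℝ ∂₀ N * gaussTrunc ℝ ∂₁ N) p := by
  set M := p.totalDegree + 1
  have h_def : expNegHalfLap p = (gaussTrunc ℝ ∂₀ M * gaussTrunc ℝ ∂₁ M) p := by
    simp only [gaussTrunc, gaussCoeff, Module.End.mul_apply, LinearMap.sum_apply,
      LinearMap.smul_apply, map_sum, map_smul, smul_sum, smul_smul, Module.End.pow_apply]
    rw [expNegHalfLap, sum_comm]
    exact sum_congr rfl fun j _ => sum_congr rfl fun k _ => by rw [mul_comm]; rfl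
  have h₁ : (∂₁ ^ M) p = 0 := pderiv_pow_apply_eq_zero 1 (Nat.lt_succ_self _)
  have h₀ : (∂₀ ^ M) (gaussTrunc ℝ ∂₁ M p) = 0 := by
    rw [← Module.End.mul_apply, ← (((commute_pderiv 1 0).pow_right M).gaussTrunc_left M).eq,
      Module.End.mul_apply, pderiv_pow_apply_eq_zero 0 (Nat.lt_succ_self _), map_zero]
  rw [h_def, Module.End.mul_apply, Module.End.mul_apply,
    gaussTrunc_apply_eq_of_pow_apply_eq_zero (N := N) (by omega) h₁,
    gaussTrunc_apply_eq_of_pow_apply_eq_zero (N := N) (by omega) h₀]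

/-- Proposition 3.1 (intertwining form): for every bivariate polynomial `p`,
`𝔇 (E₂ p) = E₂ (𝔇' p)`, where `𝔇 = (x∂x − ∂x²) + (y∂y − ∂y²) − 2β ∂x∂y` and
`𝔇' = x∂x + y∂y − 2β ∂x∂y`. -/
theorem expNegHalfLap_intertwines (β : ℝ) (p : MvPolynomial (Fin 2) ℝ) :
    X 0 * pderiv 0 (expNegHalfLap p) - pderiv 0 (pderiv 0 (expNegHalfLap p)) +
        X 1 * pderiv 1 (expNegHalfLap p) - pderiv 1 (pderiv 1 (expNegHalfLap p)) -
        C (2 * β) * pderiv 0 (pderiv 1 (expNegHalfLap p)) =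
      expNegHalfLap
        (X 0 * pderiv 0 p + X 1 * pderiv 1 p - C (2 * β) * pderiv 0 (pderiv 1 p)) := by
  set q := X 0 * pderiv 0 p + X 1 * pderiv 1 p - C (2 * β) * pderiv 0 (pderiv 1 p)
  set N := max p.totalDegree q.totalDegree + 1
  have h₀₁ : Commute ∂₀ (LinearMap.mulLeft ℝ (X 1)) := commute_pderiv_mulLeft_X one_ne_zero
  have h₁₀ : Commute ∂₁ (LinearMap.mulLeft ℝ (X 0)) := commute_pderiv_mulLeft_X zero_ne_one
  have key := LinearMap.congr_fun (gaussTrunc_mul_gaussTrunc_intertwines (K := ℝ)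
    (pderiv_mul_mulLeft_X_self 0) (pderiv_mul_mulLeft_X_self 1) (commute_pderiv 0 1) h₀₁ h₁₀
    (2 * β) N) p
  have hp : p.totalDegree < 2 * N := by omega
  simp only [Module.End.mul_apply, LinearMap.add_apply, LinearMap.sub_apply,
    LinearMap.smul_apply, sq, pderiv_pow_apply_eq_zero _ hp, map_zero, add_zero, smul_zero,
    LinearMap.mulLeft_apply, Derivation.coeFn_coe, ← C_mul'] at key
  rw [expNegHalfLap_eq_gaussTrunc_mul_apply (N := N) (by omega),
    expNegHalfLap_eq_gaussTrunc_mul_apply (N := N) (by omega)]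
  exact key
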